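/- arXiv:2605.13022 — 4 statements merged into one kernel-verified Lean document; each statement's English description precedes it below -/
import Mathlib

section
/- Let r be a unit-speed biregular curve on a circular cylinder of radius ρ with axis a, and let ψ = sin²α = 1 - ⟨t,a⟩². Then ρ² = ψ²/κ² + (1/τ²)·(3ψ'/(2κ) - ψκ'/κ²)². -/
/-!
Let `P = r - ⟪r, a⟫ a` be the component of the curve orthogonal to the axis and `u, v, w` its
coordinates in the Frenet frame, so that `ρ² = ‖P‖² = u² + v² + w²`. Since `‖P‖²` is constant,
`u = 0`; differentiating `u` with the Frenet equations gives `ψ + κ v = 0`, and differentiating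
once more, using `ψ' = -2κ ⟪t, a⟫⟪n, a⟫`, gives `3ψ'/2 + κ' v + κ τ w = 0`. Solving for `v` and
`w` yields the formula.
-/

open RealInnerProductSpace Module

theorem IsOpen.hasDerivAt_eq_zero_of_eqOn_const {F : Type*} [NormedAddCommGroup F]
    [NormedSpace ℝ F] {I : Set ℝ} (hI : IsOpen I) {f : ℝ → F} {f' c : F} {x : ℝ}
    (hfc : ∀ y ∈ I, f y = c) (hx : x ∈ I) (hf : HasDerivAt f f' x) : f' = 0 :=
  hf.unique <| (hasDerivAt_const x c).congr_of_eventuallyEq <|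
    Filter.eventually_of_mem (hI.mem_nhds hx) hfc

section

variable {E : Type*} [NormedAddCommGroup E] [InnerProductSpace ℝ E]

theorem Orthonormal.sum_sq_inner_right_of_card_eq_finrank [FiniteDimensional ℝ E] {ι : Type*}
    [Fintype ι] {v : ι → E} (hv : Orthonormal ℝ v) (hcard : Fintype.card ι = finrank ℝ E)
    (x : E) : ∑ i, ⟪v i, x⟫ ^ 2 = ‖x‖ ^ 2 := by
  simpa using (OrthonormalBasis.mk hv
    (hv.linearIndependent.span_eq_top_of_card_eq_finrank' hcard).ge).sum_sq_inner_right x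

theorem norm_sq_eq_sum_sq_inner_of_orthonormal_three [FiniteDimensional ℝ E]
    (hE : finrank ℝ E = 3) {e₁ e₂ e₃ : E} (h₁ : ‖e₁‖ = 1) (h₂ : ‖e₂‖ = 1) (h₃ : ‖e₃‖ = 1)
    (h₁₂ : ⟪e₁, e₂⟫ = 0) (h₁₃ : ⟪e₁, e₃⟫ = 0) (h₂₃ : ⟪e₂, e₃⟫ = 0) (x : E) :
    ‖x‖ ^ 2 = ⟪x, e₁⟫ ^ 2 + ⟪x, e₂⟫ ^ 2 + ⟪x, e₃⟫ ^ 2 := by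
  have hon : Orthonormal ℝ ![e₁, e₂, e₃] := by
    simp [Fin.forall_fin_succ, h₁, h₂, h₃, h₁₂, h₁₃, h₂₃]
  rw [← hon.sum_sq_inner_right_of_card_eq_finrank (by simp [hE]) x, Fin.sum_univ_three]
  simp [real_inner_comm x]

def projPerp (a x : E) : E := x - ⟪x, a⟫ • a

theorem inner_projPerp_left (a x y : E) :
    ⟪projPerp a x, y⟫ = ⟪x, y⟫ - ⟪x, a⟫ * ⟪y, a⟫ := by
  simp [projPerp, inner_sub_left, real_inner_smul_left, real_inner_comm a y]

theorem inner_projPerp_projPerp {a : E} (ha : ‖a‖ = 1) (x y : E) :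
    ⟪projPerp a x, projPerp a y⟫ = ⟪projPerp a x, y⟫ := by
  have haa : ⟪a, a⟫ = 1 := by rw [real_inner_self_eq_norm_sq, ha, one_pow]
  simp only [projPerp, inner_sub_left, inner_sub_right, real_inner_smul_left,
    real_inner_smul_right, haa, real_inner_comm a]
  ring

theorem norm_projPerp_sq {a : E} (ha : ‖a‖ = 1) (x : E) :
    ‖projPerp a x‖ ^ 2 = ‖x‖ ^ 2 - ⟪x, a⟫ ^ 2 := by
  rw [← real_inner_self_eq_norm_sq, inner_projPerp_projPerp ha, inner_projPerp_left,
    real_inner_self_eq_norm_sq]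
  ring

theorem HasDerivAt.projPerp {r : ℝ → E} {r' : E} {s : ℝ} (a : E) (hr : HasDerivAt r r' s) :
    HasDerivAt (fun y => projPerp a (r y)) (projPerp a r') s := by
  have h := hr.sub ((hr.inner ℝ (hasDerivAt_const s a)).smul_const a)
  rw [inner_zero_right, zero_add] at h
  exact h

variable {r t n b : ℝ → E} {κ τ : ℝ → ℝ} {a : E} {s : ℝ}

theorem hasDerivAt_norm_projPerp_sq (ha : ‖a‖ = 1) (hr : HasDerivAt r (t s) s) :
    HasDerivAt (fun y => ‖projPerp a (r y)‖ ^ 2) (2 * ⟪projPerp a (r s), t s⟫) s := by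
  simpa only [inner_projPerp_projPerp ha, real_inner_comm] using (hr.projPerp a).norm_sq

theorem hasDerivAt_one_sub_inner_sq (ht : HasDerivAt t (κ s • n s) s) :
    HasDerivAt (fun y => 1 - ⟪t y, a⟫ ^ 2) (-(2 * κ s * (⟪t s, a⟫ * ⟪n s, a⟫))) s := by
  have h := ((ht.inner ℝ (hasDerivAt_const s a)).pow 2).const_sub 1
  refine h.congr_deriv ?_
  simp only [inner_zero_right, zero_add, real_inner_smul_left]
  ring

theorem hasDerivAt_inner_projPerp_tangent (hr : HasDerivAt r (t s) s)
    (ht : HasDerivAt t (κ s • n s) s) (htu : ‖t s‖ = 1) :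
    HasDerivAt (fun y => ⟪projPerp a (r y), t y⟫)
      (1 - ⟪t s, a⟫ ^ 2 + κ s * ⟪projPerp a (r s), n s⟫) s := by
  refine ((hr.projPerp a).inner ℝ ht).congr_deriv ?_
  simp only [real_inner_smul_right, inner_projPerp_left, real_inner_self_eq_norm_sq, htu]
  ring

theorem hasDerivAt_inner_projPerp_normal (hr : HasDerivAt r (t s) s)
    (hn : HasDerivAt n ((-κ s) • t s + τ s • b s) s) (htn : ⟪t s, n s⟫ = 0) :
    HasDerivAt (fun y => ⟪projPerp a (r y), n y⟫)
      (-(⟪t s, a⟫ * ⟪n s, a⟫) - κ s * ⟪projPerp a (r s), t s⟫ +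
        τ s * ⟪projPerp a (r s), b s⟫) s := by
  refine ((hr.projPerp a).inner ℝ hn).congr_deriv ?_
  simp only [inner_add_right, real_inner_smul_right, inner_projPerp_left, htn]
  ring

end

theorem sum_sq_eq_of_cylinder_relations {ψ ψ' κ κ' τ p u v w : ℝ} (hκ : κ ≠ 0) (hτ : τ ≠ 0)
    (hu : u = 0) (hv : ψ + κ * v = 0) (hψ' : ψ' = -(2 * κ * p))
    (hw : ψ' + (κ' * v + κ * (-p - κ * u + τ * w)) = 0) :
    u ^ 2 + v ^ 2 + w ^ 2 =
      ψ ^ 2 / κ ^ 2 + (1 / τ ^ 2) * (3 * ψ' / (2 * κ) - ψ * κ' / κ ^ 2) ^ 2 := by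
  subst hu hψ'
  have hv' : v = -ψ / κ := by field_simp; linarith
  have hw' : w = (3 * κ * p - κ' * v) / (κ * τ) := by field_simp; linarith
  rw [hw', hv']
  field_simp
  ring

theorem stmt_5_general (I : Set ℝ) (hI : IsOpen I)
    (r t n b : ℝ → EuclideanSpace ℝ (Fin 3)) (κ τ : ℝ → ℝ)
    (a : EuclideanSpace ℝ (Fin 3)) (ρ : ℝ) (ha : ‖a‖ = 1)
    (hr' : ∀ s, HasDerivAt r (t s) s)
    (htu : ∀ s, ‖t s‖ = 1) (hnu : ∀ s, ‖n s‖ = 1) (hbu : ∀ s, ‖b s‖ = 1)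
    (htn : ∀ s, ⟪t s, n s⟫ = 0) (htb : ∀ s, ⟪t s, b s⟫ = 0)
    (hnb : ∀ s, ⟪n s, b s⟫ = 0)
    (ht' : ∀ s, HasDerivAt t (κ s • n s) s)
    (hn' : ∀ s, HasDerivAt n ((-κ s) • t s + τ s • b s) s)
    (hκ : ∀ s, 0 < κ s) (hτ : ∀ s, τ s ≠ 0)
    (hκd : Differentiable ℝ κ)
    (hcyl : ∀ s ∈ I, ‖r s‖ ^ 2 - ⟪r s, a⟫ ^ 2 = ρ ^ 2)
    (ψ : ℝ → ℝ) (hψ : ∀ s, ψ s = 1 - ⟪t s, a⟫ ^ 2) :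
    ∀ s ∈ I,
      ρ ^ 2 = ψ s ^ 2 / κ s ^ 2 +
        (1 / τ s ^ 2) * (3 * deriv ψ s / (2 * κ s) - ψ s * deriv κ s / κ s ^ 2) ^ 2 := by
  obtain rfl : ψ = fun y => 1 - ⟪t y, a⟫ ^ 2 := funext hψ
  have hu : ∀ y ∈ I, ⟪projPerp a (r y), t y⟫ = 0 := fun y hy => by
    have := hI.hasDerivAt_eq_zero_of_eqOn_const
      (fun z hz => (norm_projPerp_sq ha (r z)).trans (hcyl z hz)) hy
      (hasDerivAt_norm_projPerp_sq ha (hr' y))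
    linarith
  have hv : ∀ y ∈ I, 1 - ⟪t y, a⟫ ^ 2 + κ y * ⟪projPerp a (r y), n y⟫ = 0 := fun y hy =>
    hI.hasDerivAt_eq_zero_of_eqOn_const hu hy
      (hasDerivAt_inner_projPerp_tangent (hr' y) (ht' y) (htu y))
  intro s hs
  have hψ' := hasDerivAt_one_sub_inner_sq (a := a) (ht' s)
  have hw := hI.hasDerivAt_eq_zero_of_eqOn_const hv hs
    (hψ'.add ((hκd s).hasDerivAt.mul (hasDerivAt_inner_projPerp_normal (hr' s) (hn' s) (htn s))))
  rw [← hcyl s hs, ← norm_projPerp_sq ha, hψ'.deriv,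
    norm_sq_eq_sum_sq_inner_of_orthonormal_three finrank_euclideanSpace_fin
      (htu s) (hnu s) (hbu s) (htn s) (htb s) (hnb s)]
  exact sum_sq_eq_of_cylinder_relations (hκ s).ne' (hτ s) (hu s hs) (hv s hs) rfl hw

theorem stmt_5 (I : Set ℝ) (hI : IsOpen I)
    (r t n b : ℝ → EuclideanSpace ℝ (Fin 3)) (κ τ : ℝ → ℝ)
    (a : EuclideanSpace ℝ (Fin 3)) (ρ : ℝ) (ha : ‖a‖ = 1) (hρ : 0 < ρ)
    (hr' : ∀ s, HasDerivAt r (t s) s)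
    (htu : ∀ s, ‖t s‖ = 1) (hnu : ∀ s, ‖n s‖ = 1) (hbu : ∀ s, ‖b s‖ = 1)
    (htn : ∀ s, ⟪t s, n s⟫ = 0) (htb : ∀ s, ⟪t s, b s⟫ = 0)
    (hnb : ∀ s, ⟪n s, b s⟫ = 0)
    (ht' : ∀ s, HasDerivAt t (κ s • n s) s)
    (hn' : ∀ s, HasDerivAt n ((-κ s) • t s + τ s • b s) s)
    (hb' : ∀ s, HasDerivAt b ((-τ s) • n s) s)
    (hκ : ∀ s, 0 < κ s) (hτ : ∀ s, τ s ≠ 0)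
    (hκd : Differentiable ℝ κ)
    (hcyl : ∀ s ∈ I, ‖r s‖ ^ 2 - ⟪r s, a⟫ ^ 2 = ρ ^ 2)
    (ψ : ℝ → ℝ) (hψ : ∀ s, ψ s = 1 - ⟪t s, a⟫ ^ 2) :
    ∀ s ∈ I,
      ρ ^ 2 = ψ s ^ 2 / κ s ^ 2 +
        (1 / τ s ^ 2) * (3 * deriv ψ s / (2 * κ s) - ψ s * deriv κ s / κ s ^ 2) ^ 2 :=
  stmt_5_general I hI r t n b κ τ a ρ ha hr' htu hnu hbu htn htb hnb ht' hn' hκ hτ hκd hcyl ψ hψ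
end

section
/- Under the hypotheses that r is a unit-speed biregular curve on a circular cylinder of radius ρ, the function ψ = 1 - ⟨t,a⟩² satisfies ψ² ≤ ρ²κ² pointwise. -/
open RealInnerProductSpace

lemma deriv_zero_of_const_on_open {I : Set ℝ} (hI : IsOpen I) {f f' : ℝ → ℝ} {C : ℝ}
    (hf : ∀ u, HasDerivAt f (f' u) u) (hc : ∀ u ∈ I, f u = C) :
    ∀ u ∈ I, f' u = 0 := by
  intro u hu
  have heq : f =ᶠ[nhds u] fun _ => C := by
    filter_upwards [hI.mem_nhds hu] with x hx using hc x hx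
  exact ((hf u).congr_of_eventuallyEq heq.symm).unique (hasDerivAt_const u C)

theorem stmt_6 (I : Set ℝ) (hI : IsOpen I)
    (r t n b : ℝ → EuclideanSpace ℝ (Fin 3)) (κ τ : ℝ → ℝ)
    (a : EuclideanSpace ℝ (Fin 3)) (ρ : ℝ) (ha : ‖a‖ = 1) (hρ : 0 < ρ)
    (hr' : ∀ s, HasDerivAt r (t s) s)
    (htu : ∀ s, ‖t s‖ = 1) (hnu : ∀ s, ‖n s‖ = 1) (hbu : ∀ s, ‖b s‖ = 1)
    (htn : ∀ s, ⟪t s, n s⟫ = 0) (htb : ∀ s, ⟪t s, b s⟫ = 0)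
    (hnb : ∀ s, ⟪n s, b s⟫ = 0)
    (ht' : ∀ s, HasDerivAt t (κ s • n s) s)
    (hn' : ∀ s, HasDerivAt n ((-κ s) • t s + τ s • b s) s)
    (hb' : ∀ s, HasDerivAt b ((-τ s) • n s) s)
    (hκ : ∀ s, 0 < κ s) (hτ : ∀ s, τ s ≠ 0)
    (hcyl : ∀ s ∈ I, ‖r s‖ ^ 2 - ⟪r s, a⟫ ^ 2 = ρ ^ 2)
    (ψ : ℝ → ℝ) (hψ : ∀ s, ψ s = 1 - ⟪t s, a⟫ ^ 2) :
    ∀ s ∈ I, ψ s ^ 2 ≤ ρ ^ 2 * κ s ^ 2 := by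
  have hra : ∀ u, HasDerivAt (fun u => ⟪r u, a⟫) ⟪t u, a⟫ u := by
    intro u
    have h := HasDerivAt.inner ℝ (hr' u) (hasDerivAt_const u a)
    simpa only [inner_zero_right, zero_add] using h
  have hta : ∀ u, HasDerivAt (fun u => ⟪t u, a⟫) ⟪κ u • n u, a⟫ u := by
    intro u
    have h := HasDerivAt.inner ℝ (ht' u) (hasDerivAt_const u a)
    simpa only [inner_zero_right, zero_add] using h
  have hF : ∀ u, HasDerivAt (fun u => ⟪r u, r u⟫ - ⟪r u, a⟫ * ⟪r u, a⟫)
      ((⟪r u, t u⟫ + ⟪t u, r u⟫) - (⟪t u, a⟫ * ⟪r u, a⟫ + ⟪r u, a⟫ * ⟪t u, a⟫)) u := by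
    intro u
    exact (HasDerivAt.inner ℝ (hr' u) (hr' u)).sub ((hra u).mul (hra u))
  have hFc : ∀ u ∈ I, ⟪r u, r u⟫ - ⟪r u, a⟫ * ⟪r u, a⟫ = ρ ^ 2 := by
    intro u hu
    have h := hcyl u hu
    rw [← real_inner_self_eq_norm_sq] at h
    nlinarith [h]
  have hF0 := deriv_zero_of_const_on_open hI hF hFc
  have hG0 : ∀ u ∈ I, ⟪r u, t u⟫ - ⟪r u, a⟫ * ⟪t u, a⟫ = 0 := by
    intro u hu
    have h := hF0 u hu
    have hc2 : ⟪r u, t u⟫ = ⟪t u, r u⟫ := real_inner_comm _ _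
    linarith
  have hG : ∀ u, HasDerivAt (fun u => ⟪r u, t u⟫ - ⟪r u, a⟫ * ⟪t u, a⟫)
      ((⟪r u, κ u • n u⟫ + ⟪t u, t u⟫) - (⟪t u, a⟫ * ⟪t u, a⟫ + ⟪r u, a⟫ * ⟪κ u • n u, a⟫)) u := by
    intro u
    exact (HasDerivAt.inner ℝ (hr' u) (ht' u)).sub ((hra u).mul (hta u))
  have hH0 := deriv_zero_of_const_on_open hI hG hG0
  intro s hs
  have hH := hH0 s hs
  have htt : ⟪t s, t s⟫ = (1:ℝ) := by
    have h := real_inner_self_eq_norm_sq (t s)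
    rw [htu s] at h; simpa using h
  rw [htt, real_inner_smul_left, real_inner_smul_right] at hH
  have hψs : ψ s = -(κ s * (⟪r s, n s⟫ - ⟪r s, a⟫ * ⟪n s, a⟫)) := by
    rw [hψ s]; nlinarith [hH]
  -- Cauchy-Schwarz with v = r s - ⟪r s, a⟫ • a
  have haa : ⟪a, a⟫ = (1:ℝ) := by
    have h := real_inner_self_eq_norm_sq a
    rw [ha] at h; simpa using h
  have hacomm : ⟪a, r s⟫ = ⟪r s, a⟫ := real_inner_comm (r s) a
  have hancomm : ⟪a, n s⟫ = ⟪n s, a⟫ := real_inner_comm (n s) a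
  have hvv : ⟪r s - ⟪r s, a⟫ • a, r s - ⟪r s, a⟫ • a⟫ = ρ ^ 2 := by
    have hc := hFc s hs
    simp only [inner_sub_left, inner_sub_right, real_inner_smul_left,
      real_inner_smul_right, haa, hacomm]
    nlinarith [hc]
  have hvn : ⟪r s - ⟪r s, a⟫ • a, n s⟫ = ⟪r s, n s⟫ - ⟪r s, a⟫ * ⟪n s, a⟫ := by
    simp only [inner_sub_left, real_inner_smul_left, hancomm]
  have hcs : (⟪r s, n s⟫ - ⟪r s, a⟫ * ⟪n s, a⟫) ^ 2 ≤ ρ ^ 2 := by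
    have h1 : |⟪r s - ⟪r s, a⟫ • a, n s⟫| ≤ ‖r s - ⟪r s, a⟫ • a‖ * ‖n s‖ :=
      abs_real_inner_le_norm _ _
    have h2 : ‖r s - ⟪r s, a⟫ • a‖ ^ 2 = ρ ^ 2 := by
      rw [← real_inner_self_eq_norm_sq]; exact hvv
    have h3 : ‖r s - ⟪r s, a⟫ • a‖ = ρ := by
      nlinarith [norm_nonneg (r s - ⟪r s, a⟫ • a), hρ.le]
    rw [h3, hnu s, mul_one, hvn] at h1
    nlinarith [abs_nonneg (⟪r s, n s⟫ - ⟪r s, a⟫ * ⟪n s, a⟫), sq_abs (⟪r s, n s⟫ - ⟪r s, a⟫ * ⟪n s, a⟫)]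
  have he : ψ s ^ 2 = κ s ^ 2 * (⟪r s, n s⟫ - ⟪r s, a⟫ * ⟪n s, a⟫) ^ 2 := by
    rw [hψs]; ring
  rw [he]
  nlinarith [hcs, sq_nonneg (κ s)]
end

section
/- If a curve of constant curvature κ₀ > 0 and nonvanishing torsion τ lies on a circular cylinder of radius ρ, then its torsion satisfies |τ(s)| ≤ 3/(2ρ) for all s, unless the curve is a circular helix. -/
/-!
Let `c = r - ⟪r, a⟫ a` be the component of the curve orthogonal to the axis, `P, Q, W` its
coordinates in the Frenet frame and `T, N, B` those of `a`. Differentiating `‖c‖² = ρ²` three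
times with the Frenet equations gives `P = 0`, `κ Q = T² - 1` and `τ W = 3 T N`; Parseval in the
frame adds `Q N + W B = 0` and `Q² + W² = ρ²`. Wherever `W ≠ 0` this forces
`ρ² τ² = 9 T² (1 - T²) ≤ 9 / 4`. At a zero of `W` one finds `N = 0`, `Q = -ρ` and
`W' = τ ρ - T B`: either `W' = 0`, and then `ρ |τ| = |T B| ≤ 1 / 2`, or the zero is isolated and the
bound holds on a punctured neighbourhood. It then holds at the point itself, because `τ` is, up to
sign, the derivative of `⟪b, n(s₀)⟫` there, and derivatives have the intermediate value property.
-/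

open RealInnerProductSpace Filter Metric Set Topology

theorem le_of_hasDerivAt_of_eventually_le {f f' : ℝ → ℝ} {x M : ℝ}
    (hf : ∀ᶠ y in 𝓝 x, HasDerivAt f (f' y) y) (hM : ∀ᶠ y in 𝓝[≠] x, f' y ≤ M) :
    f' x ≤ M := by
  by_contra! hx
  obtain ⟨δ, hδ, hball⟩ := eventually_nhds_iff_ball.1 (hf.and (eventually_nhdsWithin_iff.1 hM))
  have hy : x + δ / 2 ∈ ball x δ := by
    rw [mem_ball, Real.dist_eq, add_sub_cancel_left, abs_of_pos (half_pos hδ)]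
    exact half_lt_self hδ
  -- Darboux: `f'` takes the value `(M + f' x) / 2` on the ball, necessarily away from `x`.
  have hdarboux := (convex_ball x δ).ordConnected.image_hasDerivWithinAt
    fun y hy => (hball y hy).1.hasDerivWithinAt
  obtain ⟨c, hc, hfc⟩ := hdarboux.out (mem_image_of_mem _ hy)
    (mem_image_of_mem _ (mem_ball_self hδ))
    (show (M + f' x) / 2 ∈ Icc (f' (x + δ / 2)) (f' x) from
      ⟨by linarith [(hball _ hy).2 (by simp [hδ.ne'])], by linarith⟩)
  have hcx : c ≠ x := by rintro rfl; linarith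
  linarith [(hball c hc).2 hcx]

theorem abs_le_of_hasDerivAt_of_eventually_abs_le {f f' : ℝ → ℝ} {x M : ℝ}
    (hf : ∀ᶠ y in 𝓝 x, HasDerivAt f (f' y) y) (hM : ∀ᶠ y in 𝓝[≠] x, |f' y| ≤ M) :
    |f' x| ≤ M := by
  refine abs_le.2 ⟨?_, le_of_hasDerivAt_of_eventually_le hf (hM.mono fun y hy => (abs_le.1 hy).2)⟩
  have := le_of_hasDerivAt_of_eventually_le (f := -f) (f' := -f') (M := M)
    (hf.mono fun y hy => hy.neg)
    (hM.mono fun y hy => by simp only [Pi.neg_apply]; linarith [(abs_le.1 hy).1])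
  simp only [Pi.neg_apply] at this
  linarith

theorem HasDerivAt.eq_zero_of_forall_mem_eq {f : ℝ → ℝ} {I : Set ℝ} (hI : IsOpen I) {c d s : ℝ}
    (hd : HasDerivAt f d s) (hs : s ∈ I) (hf : ∀ u ∈ I, f u = c) : d = 0 :=
  hd.unique <| (hasDerivAt_const s c).congr_of_eventuallyEq <|
    eventually_of_mem (hI.mem_nhds hs) hf

theorem Orthonormal.inner_eq_of_finrank_eq_three {E : Type*} [NormedAddCommGroup E]
    [InnerProductSpace ℝ E] [FiniteDimensional ℝ E] (hE : Module.finrank ℝ E = 3) {u v w : E}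
    (huvw : Orthonormal ℝ ![u, v, w]) (x y : E) :
    ⟪x, y⟫ = ⟪x, u⟫ * ⟪y, u⟫ + ⟪x, v⟫ * ⟪y, v⟫ + ⟪x, w⟫ * ⟪y, w⟫ := by
  let B := (basisOfOrthonormalOfCardEqFinrank huvw (by simp [hE])).toOrthonormalBasis
    (by rwa [coe_basisOfOrthonormalOfCardEqFinrank])
  have hB : ⇑B = ![u, v, w] := by
    simp [B, Module.Basis.coe_toOrthonormalBasis, coe_basisOfOrthonormalOfCardEqFinrank]
  rw [← B.sum_inner_mul_inner, Fin.sum_univ_three, hB]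
  simp [real_inner_comm y]

section PerpComponent

variable {E : Type*} [NormedAddCommGroup E] [InnerProductSpace ℝ E]

def perpComponent (a x : E) : E := x - ⟪x, a⟫ • a

theorem inner_perpComponent_left (a x y : E) :
    ⟪perpComponent a x, y⟫ = ⟪x, y⟫ - ⟪x, a⟫ * ⟪a, y⟫ := by
  rw [perpComponent, inner_sub_left, real_inner_smul_left]

theorem inner_perpComponent_self {a : E} (ha : ‖a‖ = 1) (x : E) : ⟪perpComponent a x, a⟫ = 0 := by
  rw [inner_perpComponent_left, real_inner_self_eq_norm_sq, ha]
  ring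

theorem norm_perpComponent_sq {a : E} (ha : ‖a‖ = 1) (x : E) :
    ‖perpComponent a x‖ ^ 2 = ‖x‖ ^ 2 - ⟪x, a⟫ ^ 2 := by
  rw [← real_inner_self_eq_norm_sq, ← real_inner_self_eq_norm_sq x]
  nth_rw 2 [perpComponent]
  rw [inner_sub_right, real_inner_smul_right, inner_perpComponent_self ha, inner_perpComponent_left,
    real_inner_comm a x]
  ring

theorem HasDerivAt.perpComponent {f : ℝ → E} {f' : E} {s : ℝ} (a : E) (hf : HasDerivAt f f' s) :
    HasDerivAt (fun u => perpComponent a (f u)) (perpComponent a f') s := by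
  have := hf.sub ((hf.inner ℝ (hasDerivAt_const s a)).smul_const a)
  rw [inner_zero_right, zero_add] at this
  exact this

end PerpComponent

theorem abs_le_of_cylinder_relations {ρ τ T N B Q W : ℝ} (hρ : 0 < ρ) (hW : W ≠ 0)
    (htorsion : τ * W = 3 * (T * N)) (hperp : Q * N + W * B = 0)
    (hradius : Q ^ 2 + W ^ 2 = ρ ^ 2) (hunit : T ^ 2 + N ^ 2 + B ^ 2 = 1) :
    |τ| ≤ 3 / (2 * ρ) := by
  have hN : ρ ^ 2 * N ^ 2 = W ^ 2 * (1 - T ^ 2) := by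
    linear_combination (Q * N - W * B) * hperp - N ^ 2 * hradius + W ^ 2 * hunit
  have hτ : (ρ * τ) ^ 2 = 9 * T ^ 2 * (1 - T ^ 2) := by
    refine mul_right_cancel₀ (pow_ne_zero 2 hW) ?_
    linear_combination (ρ ^ 2 * (τ * W + 3 * (T * N))) * htorsion + 9 * T ^ 2 * hN
  have hsq : (ρ * |τ|) ^ 2 ≤ (3 / 2) ^ 2 := by
    rw [mul_pow, sq_abs, ← mul_pow, hτ]
    nlinarith [sq_nonneg (2 * T ^ 2 - 1)]
  have := (pow_le_pow_iff_left₀ (by positivity) (by norm_num) two_ne_zero).1 hsq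
  rw [le_div_iff₀ (by positivity)]
  linarith

theorem eq_zero_and_eq_neg_of_cylinder_relations {ρ κ T N B Q : ℝ} (hρ : 0 < ρ) (hκ : 0 < κ)
    (hnormal : κ * Q = T ^ 2 - 1) (hperp : Q * N = 0) (hradius : Q ^ 2 = ρ ^ 2)
    (hunit : T ^ 2 + N ^ 2 + B ^ 2 = 1) : N = 0 ∧ Q = -ρ := by
  have hQ : Q ≠ 0 := by rintro rfl; nlinarith
  have hQ_nonpos : Q ≤ 0 := by nlinarith
  refine ⟨(mul_eq_zero.1 hperp).resolve_left hQ, ?_⟩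
  rcases sq_eq_sq_iff_eq_or_eq_neg.1 hradius with h | h <;> [linarith; exact h]

theorem abs_le_one_div_two_mul_of_mul_eq {ρ τ T B : ℝ} (hρ : 0 < ρ) (h : τ * ρ = T * B)
    (hunit : T ^ 2 + B ^ 2 ≤ 1) : |τ| ≤ 1 / (2 * ρ) := by
  rw [le_div_iff₀ (by positivity), mul_comm 2, ← mul_assoc, ← abs_of_pos hρ, ← abs_mul, h]
  have : |T * B| ≤ 1 / 2 := by
    rw [abs_le]
    constructor <;> nlinarith [sq_nonneg (T + B), sq_nonneg (T - B)]
  linarith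

structure IsFrenetCurve {E : Type*} [NormedAddCommGroup E] [InnerProductSpace ℝ E]
    (r t n b : ℝ → E) (κ : ℝ) (τ : ℝ → ℝ) : Prop where
  hasDerivAt_r : ∀ s, HasDerivAt r (t s) s
  norm_t : ∀ s, ‖t s‖ = 1
  norm_n : ∀ s, ‖n s‖ = 1
  norm_b : ∀ s, ‖b s‖ = 1
  inner_t_n : ∀ s, ⟪t s, n s⟫ = 0
  inner_t_b : ∀ s, ⟪t s, b s⟫ = 0
  inner_n_b : ∀ s, ⟪n s, b s⟫ = 0
  hasDerivAt_t : ∀ s, HasDerivAt t (κ • n s) s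
  hasDerivAt_n : ∀ s, HasDerivAt n ((-κ) • t s + τ s • b s) s
  hasDerivAt_b : ∀ s, HasDerivAt b ((-τ s) • n s) s

namespace IsFrenetCurve

variable {E : Type*} [NormedAddCommGroup E] [InnerProductSpace ℝ E] {r t n b : ℝ → E} {κ : ℝ}
  {τ : ℝ → ℝ}

theorem orthonormal (hF : IsFrenetCurve r t n b κ τ) (s : ℝ) : Orthonormal ℝ ![t s, n s, b s] := by
  simp [orthonormal_vecCons_iff, Fin.forall_fin_succ, hF.norm_t, hF.norm_n, hF.norm_b,
    hF.inner_t_n, hF.inner_t_b, hF.inner_n_b]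

theorem hasDerivAt_inner_t (hF : IsFrenetCurve r t n b κ τ) (a : E) (s : ℝ) :
    HasDerivAt (fun u => ⟪t u, a⟫) (κ * ⟪n s, a⟫) s := by
  simpa [real_inner_smul_left] using (hF.hasDerivAt_t s).inner ℝ (hasDerivAt_const s a)

theorem hasDerivAt_inner_perp_t (hF : IsFrenetCurve r t n b κ τ) (a : E) (s : ℝ) :
    HasDerivAt (fun u => ⟪perpComponent a (r u), t u⟫)
      (1 - ⟪t s, a⟫ ^ 2 + κ * ⟪perpComponent a (r s), n s⟫) s := by
  refine (((hF.hasDerivAt_r s).perpComponent a).inner ℝ (hF.hasDerivAt_t s)).congr_deriv ?_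
  rw [inner_perpComponent_left a (t s), real_inner_self_eq_norm_sq, hF.norm_t, real_inner_comm a,
    inner_smul_right]
  ring

theorem hasDerivAt_inner_perp_n (hF : IsFrenetCurve r t n b κ τ) (a : E) (s : ℝ) :
    HasDerivAt (fun u => ⟪perpComponent a (r u), n u⟫)
      (-(⟪t s, a⟫ * ⟪n s, a⟫) - κ * ⟪perpComponent a (r s), t s⟫ +
        τ s * ⟪perpComponent a (r s), b s⟫) s := by
  refine (((hF.hasDerivAt_r s).perpComponent a).inner ℝ (hF.hasDerivAt_n s)).congr_deriv ?_
  rw [inner_perpComponent_left a (t s), hF.inner_t_n, inner_add_right, inner_smul_right,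
    inner_smul_right, real_inner_comm a (n s)]
  ring

theorem hasDerivAt_inner_perp_b (hF : IsFrenetCurve r t n b κ τ) (a : E) (s : ℝ) :
    HasDerivAt (fun u => ⟪perpComponent a (r u), b u⟫)
      (-(⟪t s, a⟫ * ⟪b s, a⟫) - τ s * ⟪perpComponent a (r s), n s⟫) s := by
  refine (((hF.hasDerivAt_r s).perpComponent a).inner ℝ (hF.hasDerivAt_b s)).congr_deriv ?_
  rw [inner_perpComponent_left a (t s), hF.inner_t_b, inner_smul_right, real_inner_comm a (b s)]
  ring

theorem hasDerivAt_norm_perp_sq (hF : IsFrenetCurve r t n b κ τ) {a : E} (ha : ‖a‖ = 1)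
    (s : ℝ) :
    HasDerivAt (fun u => ‖perpComponent a (r u)‖ ^ 2)
      (2 * ⟪perpComponent a (r s), t s⟫) s := by
  refine ((hF.hasDerivAt_r s).perpComponent a).norm_sq.congr_deriv ?_
  rw [show perpComponent a (t s) = t s - ⟪t s, a⟫ • a from rfl, inner_sub_right,
    real_inner_smul_right, inner_perpComponent_self ha, mul_zero, sub_zero]

theorem abs_torsion_le_of_eventually (hF : IsFrenetCurve r t n b κ τ) {s₀ M : ℝ}
    (hM : ∀ᶠ s in 𝓝[≠] s₀, |τ s| ≤ M) : |τ s₀| ≤ M := by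
  have hφ : ∀ s, HasDerivAt (fun u => ⟪b u, n s₀⟫) (-τ s * ⟪n s, n s₀⟫) s := fun s => by
    simpa [real_inner_smul_left] using (hF.hasDerivAt_b s).inner ℝ (hasDerivAt_const s (n s₀))
  have hn : ∀ s, |⟪n s, n s₀⟫| ≤ 1 := fun s => by
    simpa [hF.norm_n] using abs_real_inner_le_norm (n s) (n s₀)
  have := abs_le_of_hasDerivAt_of_eventually_abs_le (Eventually.of_forall hφ) <|
    hM.mono fun s hs => by
      rw [abs_mul, abs_neg]
      exact (mul_le_of_le_one_right (abs_nonneg _) (hn s)).trans hs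
  rwa [real_inner_self_eq_norm_sq, hF.norm_n, one_pow, mul_one, abs_neg] at this

section Cylinder

variable {I : Set ℝ} {a : E} {ρ : ℝ}

theorem inner_perp_t_eq_zero (hF : IsFrenetCurve r t n b κ τ) (hI : IsOpen I) (ha : ‖a‖ = 1)
    (hcyl : ∀ s ∈ I, ‖perpComponent a (r s)‖ ^ 2 = ρ ^ 2) {s : ℝ} (hs : s ∈ I) :
    ⟪perpComponent a (r s), t s⟫ = 0 := by
  have := (hF.hasDerivAt_norm_perp_sq ha s).eq_zero_of_forall_mem_eq hI hs hcyl
  linarith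

theorem mul_inner_perp_n_eq (hF : IsFrenetCurve r t n b κ τ) (hI : IsOpen I) (ha : ‖a‖ = 1)
    (hcyl : ∀ s ∈ I, ‖perpComponent a (r s)‖ ^ 2 = ρ ^ 2) {s : ℝ} (hs : s ∈ I) :
    κ * ⟪perpComponent a (r s), n s⟫ = ⟪t s, a⟫ ^ 2 - 1 := by
  have := (hF.hasDerivAt_inner_perp_t a s).eq_zero_of_forall_mem_eq hI hs
    fun u hu => hF.inner_perp_t_eq_zero hI ha hcyl hu
  linarith

theorem torsion_mul_inner_perp_b_eq (hF : IsFrenetCurve r t n b κ τ) (hκ : κ ≠ 0) (hI : IsOpen I)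
    (ha : ‖a‖ = 1) (hcyl : ∀ s ∈ I, ‖perpComponent a (r s)‖ ^ 2 = ρ ^ 2) {s : ℝ} (hs : s ∈ I) :
    τ s * ⟪perpComponent a (r s), b s⟫ = 3 * (⟪t s, a⟫ * ⟪n s, a⟫) := by
  have hd := ((hF.hasDerivAt_inner_perp_n a s).const_mul κ).sub
    (((hF.hasDerivAt_inner_t a s).mul (hF.hasDerivAt_inner_t a s)).sub_const 1)
  have h0 := hd.eq_zero_of_forall_mem_eq hI hs (c := 0) fun u hu => by
    have := hF.mul_inner_perp_n_eq hI ha hcyl hu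
    simp only [Pi.sub_apply, Pi.mul_apply]
    linear_combination this
  have hP := hF.inner_perp_t_eq_zero hI ha hcyl hs
  have : κ * (τ s * ⟪perpComponent a (r s), b s⟫ - 3 * (⟪t s, a⟫ * ⟪n s, a⟫)) = 0 := by
    linear_combination h0 + κ ^ 2 * hP
  exact sub_eq_zero.1 ((mul_eq_zero.1 this).resolve_left hκ)

theorem sum_sq_inner_eq_one [FiniteDimensional ℝ E] (hE : Module.finrank ℝ E = 3)
    (hF : IsFrenetCurve r t n b κ τ) (ha : ‖a‖ = 1) (s : ℝ) :
    ⟪t s, a⟫ ^ 2 + ⟪n s, a⟫ ^ 2 + ⟪b s, a⟫ ^ 2 = 1 := by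
  have := (hF.orthonormal s).inner_eq_of_finrank_eq_three hE a a
  rw [real_inner_self_eq_norm_sq, ha, real_inner_comm (t s), real_inner_comm (n s),
    real_inner_comm (b s)] at this
  linear_combination -this

theorem inner_perp_n_b_relations [FiniteDimensional ℝ E] (hE : Module.finrank ℝ E = 3)
    (hF : IsFrenetCurve r t n b κ τ) (hI : IsOpen I) (ha : ‖a‖ = 1)
    (hcyl : ∀ s ∈ I, ‖perpComponent a (r s)‖ ^ 2 = ρ ^ 2) {s : ℝ} (hs : s ∈ I) :
    ⟪perpComponent a (r s), n s⟫ * ⟪n s, a⟫ + ⟪perpComponent a (r s), b s⟫ * ⟪b s, a⟫ = 0 ∧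
      ⟪perpComponent a (r s), n s⟫ ^ 2 + ⟪perpComponent a (r s), b s⟫ ^ 2 = ρ ^ 2 := by
  have hP := hF.inner_perp_t_eq_zero hI ha hcyl hs
  have hpar := (hF.orthonormal s).inner_eq_of_finrank_eq_three hE (perpComponent a (r s))
  constructor
  · have := hpar a
    rw [inner_perpComponent_self ha, hP, real_inner_comm (n s) a, real_inner_comm (b s) a] at this
    linear_combination -this
  · have := hpar (perpComponent a (r s))
    rw [real_inner_self_eq_norm_sq, hcyl s hs, hP] at this
    linear_combination -this

theorem abs_torsion_le_of_inner_perp_b_ne_zero [FiniteDimensional ℝ E]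
    (hE : Module.finrank ℝ E = 3) (hF : IsFrenetCurve r t n b κ τ) (hκ : κ ≠ 0) (hI : IsOpen I)
    (ha : ‖a‖ = 1) (hρ : 0 < ρ) (hcyl : ∀ s ∈ I, ‖perpComponent a (r s)‖ ^ 2 = ρ ^ 2) {s : ℝ}
    (hs : s ∈ I) (hW : ⟪perpComponent a (r s), b s⟫ ≠ 0) : |τ s| ≤ 3 / (2 * ρ) :=
  have hrel := hF.inner_perp_n_b_relations hE hI ha hcyl hs
  abs_le_of_cylinder_relations hρ hW (hF.torsion_mul_inner_perp_b_eq hκ hI ha hcyl hs) hrel.1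
    hrel.2 (hF.sum_sq_inner_eq_one hE ha s)

theorem abs_torsion_le [FiniteDimensional ℝ E] (hE : Module.finrank ℝ E = 3)
    (hF : IsFrenetCurve r t n b κ τ) (hκ : 0 < κ) (hI : IsOpen I) (ha : ‖a‖ = 1) (hρ : 0 < ρ)
    (hcyl : ∀ s ∈ I, ‖perpComponent a (r s)‖ ^ 2 = ρ ^ 2) {s₀ : ℝ} (hs₀ : s₀ ∈ I) :
    |τ s₀| ≤ 3 / (2 * ρ) := by
  by_cases hW : ⟪perpComponent a (r s₀), b s₀⟫ = 0
  swap
  · exact hF.abs_torsion_le_of_inner_perp_b_ne_zero hE hκ.ne' hI ha hρ hcyl hs₀ hW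
  obtain ⟨hperp, hradius⟩ := hF.inner_perp_n_b_relations hE hI ha hcyl hs₀
  have hunit := hF.sum_sq_inner_eq_one hE ha s₀
  rw [hW] at hperp hradius
  obtain ⟨hN, hQ⟩ := eq_zero_and_eq_neg_of_cylinder_relations hρ hκ
    (hF.mul_inner_perp_n_eq hI ha hcyl hs₀) (by simpa using hperp) (by simpa using hradius) hunit
  have hW' : HasDerivAt (fun u => ⟪perpComponent a (r u), b u⟫)
      (τ s₀ * ρ - ⟪t s₀, a⟫ * ⟪b s₀, a⟫) s₀ :=
    (hF.hasDerivAt_inner_perp_b a s₀).congr_deriv (by rw [hQ]; ring)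
  by_cases hd : τ s₀ * ρ - ⟪t s₀, a⟫ * ⟪b s₀, a⟫ = 0
  · exact (abs_le_one_div_two_mul_of_mul_eq hρ (sub_eq_zero.1 hd) (by nlinarith)).trans
      (div_le_div_of_nonneg_right (by norm_num) (by positivity))
  refine hF.abs_torsion_le_of_eventually ?_
  filter_upwards [hW'.eventually_ne hd (c := 0), nhdsWithin_le_nhds (hI.mem_nhds hs₀)]
    with s hWs hs
  exact hF.abs_torsion_le_of_inner_perp_b_ne_zero hE hκ.ne' hI ha hρ hcyl hs hWs

end Cylinder

end IsFrenetCurve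

theorem stmt_12_general (I : Set ℝ) (hI : IsOpen I)
    (r t n b : ℝ → EuclideanSpace ℝ (Fin 3)) (κ₀ : ℝ) (τ : ℝ → ℝ)
    (a : EuclideanSpace ℝ (Fin 3)) (ρ : ℝ) (ha : ‖a‖ = 1) (hρ : 0 < ρ)
    (hr' : ∀ s, HasDerivAt r (t s) s)
    (htu : ∀ s, ‖t s‖ = 1) (hnu : ∀ s, ‖n s‖ = 1) (hbu : ∀ s, ‖b s‖ = 1)
    (htn : ∀ s, ⟪t s, n s⟫ = 0) (htb : ∀ s, ⟪t s, b s⟫ = 0)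
    (hnb : ∀ s, ⟪n s, b s⟫ = 0)
    (ht' : ∀ s, HasDerivAt t (κ₀ • n s) s)
    (hn' : ∀ s, HasDerivAt n ((-κ₀) • t s + τ s • b s) s)
    (hb' : ∀ s, HasDerivAt b ((-τ s) • n s) s)
    (hκ : 0 < κ₀)
    (hcyl : ∀ s ∈ I, ‖r s‖ ^ 2 - ⟪r s, a⟫ ^ 2 = ρ ^ 2) :
    (∃ τ₀ : ℝ, ∀ s ∈ I, τ s = τ₀) ∨ (∀ s ∈ I, |τ s| ≤ 3 / (2 * ρ)) := by
  have hF : IsFrenetCurve r t n b κ₀ τ := ⟨hr', htu, hnu, hbu, htn, htb, hnb, ht', hn', hb'⟩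
  have hcyl' : ∀ s ∈ I, ‖perpComponent a (r s)‖ ^ 2 = ρ ^ 2 := fun s hs =>
    (norm_perpComponent_sq ha (r s)).trans (hcyl s hs)
  exact Or.inr fun s hs => hF.abs_torsion_le finrank_euclideanSpace_fin hκ hI ha hρ hcyl' hs

theorem stmt_12 (I : Set ℝ) (hI : IsOpen I)
    (r t n b : ℝ → EuclideanSpace ℝ (Fin 3)) (κ₀ : ℝ) (τ : ℝ → ℝ)
    (a : EuclideanSpace ℝ (Fin 3)) (ρ : ℝ) (ha : ‖a‖ = 1) (hρ : 0 < ρ)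
    (hr' : ∀ s, HasDerivAt r (t s) s)
    (htu : ∀ s, ‖t s‖ = 1) (hnu : ∀ s, ‖n s‖ = 1) (hbu : ∀ s, ‖b s‖ = 1)
    (htn : ∀ s, ⟪t s, n s⟫ = 0) (htb : ∀ s, ⟪t s, b s⟫ = 0)
    (hnb : ∀ s, ⟪n s, b s⟫ = 0)
    (ht' : ∀ s, HasDerivAt t (κ₀ • n s) s)
    (hn' : ∀ s, HasDerivAt n ((-κ₀) • t s + τ s • b s) s)
    (hb' : ∀ s, HasDerivAt b ((-τ s) • n s) s)
    (hκ : 0 < κ₀) (hτ : ∀ s, τ s ≠ 0)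
    (hcyl : ∀ s ∈ I, ‖r s‖ ^ 2 - ⟪r s, a⟫ ^ 2 = ρ ^ 2) :
    (∃ τ₀ : ℝ, ∀ s ∈ I, τ s = τ₀) ∨ (∀ s ∈ I, |τ s| ≤ 3 / (2 * ρ)) :=
  stmt_12_general I hI r t n b κ₀ τ a ρ ha hρ hr' htu hnu hbu htn htb hnb ht' hn' hb' hκ hcyl
end

section
/- Define Y(s) = C e^{±(2√2/ρ)s} with C > 0 and τ(s) = ±(6√2/ρ)·√(Y(s))·|Y(s) - 1|/(Y(s)² + 6Y(s) + 1). Then τ satisfies the ODE ρ⁴τ'²/(9 - 4ρ²τ²) = 1/2 + ρ²τ²/9 ∓ (1/6)√(9 - 4ρ²τ²) (the constant-curvature cylinder equation with κ₀ = 1/ρ). -/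
open Real

/-!
With `g = cylinderProfile` and `y = Y s`, `τ = k |g ∘ Y|` where `Y' = a Y`, `ρ² k² = 72` and
`ρ² a² = 8`. The point is the identity
`(y² + 6y + 1)² - 32 y (y - 1)² = (y² - 10y + 1)²`, which makes
`√(9 - 4ρ²τ²) = 3 |y² - 10y + 1| / (y² + 6y + 1)` rational in `y`; the equation then becomes
a polynomial identity in `y`, with `δ = -sign (y² - 10y + 1)`.
Where `Y s = 1`, `τ` has a corner: `deriv τ s = 0` (a local minimum of `|g ∘ Y|`, or the junk
value), `τ s = 0`, and the equation holds with `δ = -1`.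
-/

theorem sq_deriv_abs_of_ne_zero {h : ℝ → ℝ} {h' s : ℝ} (hh : HasDerivAt h h' s) (hs : h s ≠ 0) :
    deriv (fun t => |h t|) s ^ 2 = h' ^ 2 := by
  have hd : HasDerivAt (fun t => |h t|) (SignType.sign (h s) * h') s :=
    (hasDerivAt_abs hs).comp s hh
  rw [hd.deriv, mul_pow]
  rcases hs.lt_or_gt with hneg | hpos
  · simp [hneg]
  · simp [hpos]

theorem deriv_abs_of_eq_zero {h : ℝ → ℝ} {s : ℝ} (hs : h s = 0) :
    deriv (fun t => |h t|) s = 0 :=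
  IsLocalMin.deriv_eq_zero (Filter.Eventually.of_forall fun t => by simp [hs])

theorem sq_mul_sq_sign_mul_sqrt_two_div {ρ ε : ℝ} (hρ : ρ ≠ 0) (hε : ε = 1 ∨ ε = -1) (c : ℝ) :
    ρ ^ 2 * (ε * (c * √2 / ρ)) ^ 2 = 2 * c ^ 2 := by
  rw [mul_pow, sq_eq_one_iff.mpr hε, div_pow, mul_pow, sq_sqrt zero_le_two]
  field_simp

noncomputable def cylinderProfile (y : ℝ) : ℝ := √y * (y - 1) / (y ^ 2 + 6 * y + 1)

theorem hasDerivAt_cylinderProfile {y : ℝ} (hy : 0 < y) :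
    HasDerivAt cylinderProfile
      (-((y + 1) * (y ^ 2 - 10 * y + 1)) / (2 * √y * (y ^ 2 + 6 * y + 1) ^ 2)) y := by
  have hx := hasDerivAt_id' y
  have hnum : HasDerivAt (fun x => √x * (x - 1)) (1 / (2 * √y) * (y - 1) + √y * 1) y :=
    (hx.sqrt hy.ne').mul (hx.sub_const 1)
  have hden : HasDerivAt (fun x => x ^ 2 + 6 * x + 1) (↑2 * y ^ (2 - 1) + 6 * 1) y :=
    ((hasDerivAt_pow 2 y).add (hx.const_mul 6)).add_const 1
  refine (hnum.div hden (by positivity)).congr_deriv ?_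
  have hu : 0 < √y := sqrt_pos.mpr hy
  have hsq : √y ^ 2 = y := sq_sqrt hy.le
  generalize √y = u at hu hsq ⊢
  subst hsq
  field_simp
  ring

theorem sq_mul_deriv_cylinderProfile {y : ℝ} (hy : 0 < y) :
    (y * (-((y + 1) * (y ^ 2 - 10 * y + 1)) / (2 * √y * (y ^ 2 + 6 * y + 1) ^ 2))) ^ 2 =
      y * (y + 1) ^ 2 * (y ^ 2 - 10 * y + 1) ^ 2 / (y ^ 2 + 6 * y + 1) ^ 4 / 4 := by
  have hu : 0 < √y := sqrt_pos.mpr hy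
  rw [mul_div_assoc', div_pow, mul_pow, mul_pow, mul_pow, sq_sqrt hy.le]
  field_simp
  ring

theorem abs_cylinderProfile {y : ℝ} (hy : 0 ≤ y) :
    |cylinderProfile y| = √y * |y - 1| / (y ^ 2 + 6 * y + 1) := by
  have hQ : 0 < y ^ 2 + 6 * y + 1 := by positivity
  rw [cylinderProfile, abs_div, abs_mul, abs_of_nonneg (sqrt_nonneg y), abs_of_pos hQ]

theorem cylinderProfile_sq {y : ℝ} (hy : 0 ≤ y) :
    cylinderProfile y ^ 2 = y * (y - 1) ^ 2 / (y ^ 2 + 6 * y + 1) ^ 2 := by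
  rw [cylinderProfile, div_pow, mul_pow, sq_sqrt hy]

theorem exists_sign_cylinder_eq (ρ T D y : ℝ) (hy : 0 < y)
    (hT : ρ ^ 2 * T ^ 2 = 72 * y * (y - 1) ^ 2 / (y ^ 2 + 6 * y + 1) ^ 2)
    (hD : ρ ^ 4 * D ^ 2 =
      144 * y * (y + 1) ^ 2 * (y ^ 2 - 10 * y + 1) ^ 2 / (y ^ 2 + 6 * y + 1) ^ 4)
    (h : 4 * ρ ^ 2 * T ^ 2 < 9) :
    ∃ δ : ℝ, (δ = 1 ∨ δ = -1) ∧
      ρ ^ 4 * D ^ 2 / (9 - 4 * ρ ^ 2 * T ^ 2) =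
        1 / 2 + ρ ^ 2 * T ^ 2 / 9 + δ * (1 / 6) * √(9 - 4 * ρ ^ 2 * T ^ 2) := by
  have hQ : 0 < y ^ 2 + 6 * y + 1 := by positivity
  have hkey : 9 - 4 * ρ ^ 2 * T ^ 2 = (3 * (y ^ 2 - 10 * y + 1) / (y ^ 2 + 6 * y + 1)) ^ 2 := by
    rw [mul_assoc, hT]
    field_simp
    ring
  have hP : y ^ 2 - 10 * y + 1 ≠ 0 := by
    rintro hP
    rw [hP, mul_zero, zero_div, zero_pow two_ne_zero] at hkey
    linarith
  have hlhs : ρ ^ 4 * D ^ 2 / (9 - 4 * ρ ^ 2 * T ^ 2) =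
      16 * y * (y + 1) ^ 2 / (y ^ 2 + 6 * y + 1) ^ 2 := by
    rw [hkey, div_eq_iff (by positivity), hD]
    field_simp
    ring
  rw [hlhs, hkey, sqrt_sq_eq_abs, hT, abs_div, abs_mul, abs_of_pos hQ]
  rcases hP.lt_or_gt with hneg | hpos
  · refine ⟨1, Or.inl rfl, ?_⟩
    rw [abs_of_neg hneg]
    field_simp
    ring
  · refine ⟨-1, Or.inr rfl, ?_⟩
    rw [abs_of_pos hpos]
    field_simp
    ring

theorem stmt_13 (ρ C ε₁ ε₂ : ℝ) (hρ : 0 < ρ) (hC : 0 < C)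
    (hε₁ : ε₁ = 1 ∨ ε₁ = -1) (hε₂ : ε₂ = 1 ∨ ε₂ = -1)
    (Y τ : ℝ → ℝ)
    (hY : ∀ s, Y s = C * Real.exp (ε₁ * (2 * Real.sqrt 2 / ρ) * s))
    (hτ : ∀ s, τ s = ε₂ * (6 * Real.sqrt 2 / ρ) * Real.sqrt (Y s) * |Y s - 1| /
      ((Y s) ^ 2 + 6 * Y s + 1)) :
    ∀ s : ℝ, 4 * ρ ^ 2 * (τ s) ^ 2 < 9 →
      ∃ δ : ℝ, (δ = 1 ∨ δ = -1) ∧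
        ρ ^ 4 * (deriv τ s) ^ 2 / (9 - 4 * ρ ^ 2 * (τ s) ^ 2) =
          1 / 2 + ρ ^ 2 * (τ s) ^ 2 / 9 +
            δ * (1 / 6) * Real.sqrt (9 - 4 * ρ ^ 2 * (τ s) ^ 2) := by
  intro s hs
  set a := ε₁ * (2 * √2 / ρ)
  set k := ε₂ * (6 * √2 / ρ)
  have hYpos : ∀ t, 0 < Y t := fun t => by rw [hY]; positivity
  have hYd : HasDerivAt Y (a * Y s) s := by
    have hexp : HasDerivAt (fun t => C * exp (a * t)) (a * (C * exp (a * s))) s :=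
      (((hasDerivAt_id' s).const_mul a).exp.const_mul C).congr_deriv (by ring)
    rwa [← hY s, ← funext hY] at hexp
  have hτ_eq : τ = fun t => k * |cylinderProfile (Y t)| := funext fun t => by
    rw [hτ, abs_cylinderProfile (hYpos t).le]
    ring
  have hτs : τ s = k * |cylinderProfile (Y s)| := by rw [hτ_eq]
  have hderiv : deriv τ s = k * deriv (fun t => |cylinderProfile (Y t)|) s := by
    rw [hτ_eq, deriv_const_mul_field']
  by_cases h1 : cylinderProfile (Y s) = 0
  · refine ⟨-1, Or.inr rfl, ?_⟩
    rw [hderiv, hτs, h1, deriv_abs_of_eq_zero (h := fun t => cylinderProfile (Y t)) h1]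
    have hsqrt9 : √9 = 3 := by rw [show (9 : ℝ) = 3 ^ 2 by norm_num, sqrt_sq zero_le_three]
    norm_num [hsqrt9]
  · have hprof := (hasDerivAt_cylinderProfile (hYpos s)).comp s hYd
    refine exists_sign_cylinder_eq ρ (τ s) (deriv τ s) (Y s) (hYpos s) ?_ ?_ hs
    · rw [hτs, mul_pow, sq_abs, cylinderProfile_sq (hYpos s).le, ← mul_assoc,
        sq_mul_sq_sign_mul_sqrt_two_div hρ.ne' hε₂]
      ring
    · have hk := sq_mul_sq_sign_mul_sqrt_two_div hρ.ne' hε₂ 6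
      have ha := sq_mul_sq_sign_mul_sqrt_two_div hρ.ne' hε₁ 2
      rw [hderiv, mul_pow, sq_deriv_abs_of_ne_zero (h := fun t => cylinderProfile (Y t)) hprof h1,
        mul_comm _ (a * Y s), mul_assoc a, mul_pow a, sq_mul_deriv_cylinderProfile (hYpos s)]
      linear_combination (ρ ^ 2 * a ^ 2 * hk + 72 * ha) * (Y s * (Y s + 1) ^ 2 *
        (Y s ^ 2 - 10 * Y s + 1) ^ 2 / (Y s ^ 2 + 6 * Y s + 1) ^ 4 / 4)
end
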